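/- Let σ : [0,1] → M be a causal curve from x₀ to x₁ in a spacetime equipped with a Kaluza–Klein metric g̃ = g − a²(dy+βω)² on P = M×ℝ, and let σ̃^± be its two lightlike lifts starting at p₀=(x₀,y₀), defined by (y^±)'(λ) = ∓(1/a)|σ'(λ)| − βω(σ'(λ)). Then the arrival fiber coordinate satisfies Y₁^±[σ] = y₀ ∓ (1/a)( L(σ) + (±|q/m|)∫_σ ω ), where a = β^{-1}|q/m| and L(σ)=∫₀¹ √(g(σ',σ')) dλ. Consequently, σ maximizes the charged-particle action I_{x₀,x₁}[σ] = L(σ) + (q/m)∫_σ ω over a causal homotopy class if and only if σ minimizes Y₁^+ (when q/m>0) or maximizes Y₁^- (when q/m<0) over that class. -/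

import Mathlib

/-!
Along a lightlike lift the fiber velocity is a constant-coefficient combination of the integrands
of `L` and `∫ω`, so the fundamental theorem of calculus gives the arrival coordinates in closed
form. Since `β = |q/m| / a`, for the lift whose sign matches that of `q/m` this reads
`Y₁^± = y₀ ∓ I / a`, an affine function of the action with slope `∓ 1/a`; so maximizing `I` is
minimizing `Y₁^+` (resp. maximizing `Y₁^-`).
-/

open Set intervalIntegral
open MeasureTheory (volume)

theorem eq_add_integral_of_hasDerivAt_mul_sub_mul {y f g : ℝ → ℝ} {s t c d : ℝ}
    (hy : ∀ x ∈ uIcc s t, HasDerivAt y (c * f x - d * g x) x)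
    (hf : IntervalIntegrable f volume s t) (hg : IntervalIntegrable g volume s t) :
    y t = y s + c * (∫ x in s..t, f x) - d * ∫ x in s..t, g x := by
  have hftc := integral_eq_sub_of_hasDerivAt hy ((hf.const_mul c).sub (hg.const_mul d))
  rw [integral_sub (hf.const_mul c) (hg.const_mul d), integral_const_mul,
    integral_const_mul] at hftc
  linarith

section Extremum

variable {α : Type*} {I Y : α → ℝ} {C : Set α} {σ : α} {c k : ℝ}

theorem isMaxOn_iff_isMinOn_of_eq_sub_mul (hk : 0 < k) (hσ : σ ∈ C)
    (hY : ∀ τ ∈ C, Y τ = c - k * I τ) : IsMaxOn I C σ ↔ IsMinOn Y C σ := by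
  simp only [isMaxOn_iff, isMinOn_iff]
  refine forall₂_congr fun τ hτ => ?_
  rw [hY τ hτ, hY σ hσ, sub_le_sub_iff_left, mul_le_mul_iff_of_pos_left hk]

theorem isMaxOn_iff_isMaxOn_of_eq_add_mul (hk : 0 < k) (hσ : σ ∈ C)
    (hY : ∀ τ ∈ C, Y τ = c + k * I τ) : IsMaxOn I C σ ↔ IsMaxOn Y C σ := by
  simp only [isMaxOn_iff]
  refine forall₂_congr fun τ hτ => ?_
  rw [hY τ hτ, hY σ hσ, add_le_add_iff_left, mul_le_mul_iff_of_pos_left hk]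

end Extremum

/-- Fermat-type reformulation. The arrival fiber coordinates of the
two lightlike Kaluza–Klein lifts of a causal curve `σ` are
`Y₁^± [σ] = y₀ ∓ (1/a)(L(σ) ± |q/m| ∫_σ ω)` with `a = |q/m|/β`, and hence `σ`
maximizes the charged-particle action `I = L + (q/m)∫ω` on a causal homotopy
class iff it minimizes `Y₁^+` (for `q/m > 0`), resp. maximizes `Y₁^-` (for
`q/m < 0`), on that class. -/
theorem lightlike_lift_arrival_coordinate_and_fermat_principle
    {M : Type} (qm β y₀ : ℝ) (hqm : qm ≠ 0) (hβ : 0 < β)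
    (a : ℝ) (ha : a = |qm| / β)
    (C : Set (ℝ → M))                 -- a causal homotopy class of curves from x₀ to x₁
    (norms ωs : (ℝ → M) → ℝ → ℝ)      -- pointwise `|σ'(λ)|` and `ω(σ'(λ))`
    (hint : ∀ σ ∈ C, IntervalIntegrable (norms σ) MeasureTheory.volume 0 1 ∧
      IntervalIntegrable (ωs σ) MeasureTheory.volume 0 1)
    (L W : (ℝ → M) → ℝ)               -- length and `∫_σ ω`
    (hL : ∀ σ ∈ C, L σ = ∫ lam in (0:ℝ)..1, norms σ lam)
    (hW : ∀ σ ∈ C, W σ = ∫ lam in (0:ℝ)..1, ωs σ lam)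
    (I : (ℝ → M) → ℝ) (hI : ∀ σ ∈ C, I σ = L σ + qm * W σ)
    (yplus yminus : (ℝ → M) → ℝ → ℝ)  -- fiber coordinates of the lightlike lifts
    (hyp0 : ∀ σ ∈ C, yplus σ 0 = y₀) (hym0 : ∀ σ ∈ C, yminus σ 0 = y₀)
    (hyp' : ∀ σ ∈ C, ∀ lam ∈ Icc (0:ℝ) 1,
      HasDerivAt (yplus σ) (-(1 / a) * norms σ lam - β * ωs σ lam) lam)
    (hym' : ∀ σ ∈ C, ∀ lam ∈ Icc (0:ℝ) 1,
      HasDerivAt (yminus σ) ((1 / a) * norms σ lam - β * ωs σ lam) lam)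
    (σ : ℝ → M) (hσ : σ ∈ C) :
    (∀ τ ∈ C, yplus τ 1 = y₀ - (1 / a) * (L τ + |qm| * W τ) ∧
      yminus τ 1 = y₀ + (1 / a) * (L τ - |qm| * W τ)) ∧
    (0 < qm → ((∀ τ ∈ C, I τ ≤ I σ) ↔ (∀ τ ∈ C, yplus σ 1 ≤ yplus τ 1))) ∧
    (qm < 0 → ((∀ τ ∈ C, I τ ≤ I σ) ↔ (∀ τ ∈ C, yminus τ 1 ≤ yminus σ 1))) := by
  have hk : 0 < 1 / a := one_div_pos.mpr (ha ▸ div_pos (abs_pos.mpr hqm) hβ)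
  have hβ_eq : β = |qm| * (1 / a) := by rw [ha]; field_simp [hqm, hβ.ne']
  have arrival : ∀ τ ∈ C, yplus τ 1 = y₀ - (1 / a) * (L τ + |qm| * W τ) ∧
      yminus τ 1 = y₀ + (1 / a) * (L τ - |qm| * W τ) := by
    intro τ hτ
    obtain ⟨hn, hω⟩ := hint τ hτ
    rw [← uIcc_of_le zero_le_one] at hyp' hym'
    have hplus := eq_add_integral_of_hasDerivAt_mul_sub_mul (hyp' τ hτ) hn hω
    have hminus := eq_add_integral_of_hasDerivAt_mul_sub_mul (hym' τ hτ) hn hω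
    rw [hyp0 τ hτ, ← hL τ hτ, ← hW τ hτ, hβ_eq] at hplus
    rw [hym0 τ hτ, ← hL τ hτ, ← hW τ hτ, hβ_eq] at hminus
    exact ⟨by linear_combination hplus, by linear_combination hminus⟩
  refine ⟨arrival, fun hpos => ?_, fun hneg => ?_⟩
  · refine isMaxOn_iff_isMinOn_of_eq_sub_mul (Y := fun τ => yplus τ 1) (c := y₀) hk hσ
      fun τ hτ => ?_
    rw [(arrival τ hτ).1, hI τ hτ, abs_of_pos hpos]
  · refine isMaxOn_iff_isMaxOn_of_eq_add_mul (Y := fun τ => yminus τ 1) (c := y₀) hk hσ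
      fun τ hτ => ?_
    rw [(arrival τ hτ).2, hI τ hτ, abs_of_neg hneg, neg_mul, sub_neg_eq_add]
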